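/- arXiv:1506.01068 — 3 statements merged into one kernel-verified Lean document; each statement's English description precedes it below -/
import Mathlib

section
/- Consequently, for a characteristic function χ_A of Baire class 1, the separation rank α(χ_A) equals the oscillation rank β(χ_A). -/
open Set Filter Topology

noncomputable section

/-- Oscillation of `f` at `x` restricted to `F`. -/
def osc {X : Type*} [TopologicalSpace X] (f : X → ℝ) (x : X) (F : Set X) : ENNReal :=
  ⨅ (U : Set X) (_ : IsOpen U) (_ : x ∈ U),
    ⨆ (y) (_ : y ∈ U ∩ F) (z) (_ : z ∈ U ∩ F), ENNReal.ofReal |f y - f z|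

/-- Oscillation derivative. -/
def oscDeriv {X : Type*} [TopologicalSpace X] (f : X → ℝ) (ε : ℝ) (F : Set X) : Set X :=
  {x ∈ F | ENNReal.ofReal ε ≤ osc f x F}

/-- Iterated derivatives of a set operation. -/
def iterD {X : Type*} (D : Set X → Set X) (F : Set X) (o : Ordinal.{0}) : Set X :=
  Ordinal.limitRecOn o F (fun _ ih => D ih) (fun o _ ih => ⋂ (η : Ordinal.{0}) (h : η < o), ih η h)

open Classical in
/-- Rank of a derivative: least `θ` with `D^θ(X) = ∅`, or `ω₁` if there is none. -/
def rkD {X : Type*} (D : Set X → Set X) : Ordinal.{0} :=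
  if ∃ θ, iterD D Set.univ θ = ∅ then sInf {θ | iterD D Set.univ θ = ∅}
  else (Cardinal.aleph 1).ord

/-- Oscillation rank. -/
def betaRank {X : Type*} [TopologicalSpace X] (f : X → ℝ) : Ordinal.{0} :=
  ⨆ ε : {ε : ℝ // 0 < ε}, rkD (oscDeriv f ε.1)

/-- Oscillation of a sequence of functions. -/
def oscSeq {X : Type*} [TopologicalSpace X] (f : ℕ → X → ℝ) (x : X) (F : Set X) : ENNReal :=
  ⨅ (U : Set X) (_ : IsOpen U) (_ : x ∈ U) (N : ℕ),
    ⨆ (m) (_ : N ≤ m) (n) (_ : N ≤ n) (y) (_ : y ∈ U ∩ F), ENNReal.ofReal |f m y - f n y|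

def oscSeqDeriv {X : Type*} [TopologicalSpace X] (f : ℕ → X → ℝ) (ε : ℝ) (F : Set X) : Set X :=
  {x ∈ F | ENNReal.ofReal ε ≤ oscSeq f x F}

/-- Convergence rank of a sequence. -/
def gammaRank {X : Type*} [TopologicalSpace X] (f : ℕ → X → ℝ) : Ordinal.{0} :=
  ⨆ ε : {ε : ℝ // 0 < ε}, rkD (oscSeqDeriv f ε.1)

/-- Alternating transfinite sum `Σ*_{η<θ} (−1)^η f_η`. -/
def altSum {X : Type*} (f : Ordinal.{0} → X → ℝ) (θ : Ordinal.{0}) : X → ℝ :=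
  Ordinal.limitRecOn θ (fun _ => 0)
    (fun η ih x => ih x + (if η % 2 = 0 then f η x else - f η x))
    (fun θ _ ih x => sSup {y | ∃ ζ, ∃ h : ζ < θ, ζ % 2 = 0 ∧ ih ζ h x = y})

/-- The `ξ`-th additive Borel class. -/
def Sigma0 {X : Type*} [TopologicalSpace X] (ξ : Ordinal.{0}) : Set (Set X) :=
  {s | IsOpen s} ∪
  {s | ∃ g : ℕ → Set X,
        (∀ n, ∃ η, ∃ _ : η < ξ, 1 ≤ η ∧ (g n)ᶜ ∈ Sigma0 η) ∧ s = ⋃ n, g n}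
termination_by ξ

/-- Baire class `ξ` functions. -/
def BaireClass {X : Type*} [TopologicalSpace X] (ξ : Ordinal.{0}) (f : X → ℝ) : Prop :=
  (ξ = 0 ∧ Continuous f) ∨
  (1 ≤ ξ ∧ ∃ g : ℕ → X → ℝ,
      (∀ n, ∃ η, ∃ _ : η < ξ, BaireClass η (g n)) ∧
      ∀ x, Tendsto (fun n => g n x) atTop (𝓝 (f x)))
termination_by ξ


/-- The separation rank `α`. -/
def alphaRank {X : Type*} [TopologicalSpace X] (f : X → ℝ) : Ordinal.{0} :=
  ⨆ pq : {pq : ℚ × ℚ // pq.1 < pq.2},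
    rkD (fun F => closure (F ∩ {x | f x ≤ (pq.1.1 : ℝ)}) ∩
      closure (F ∩ {x | (pq.1.2 : ℝ) ≤ f x}))

/- For `χ = A.indicator 1` both ranks are the rank of the single derivative
`sepDeriv A : F ↦ closure (F ∩ Aᶜ) ∩ closure (F ∩ A)`. The oscillation of `χ` at `x` relative
to `F` is `1` or `0` according as `x` does or does not lie in `sepDeriv A F`, so every `D_{χ,ε}`
with `0 < ε ≤ 1` is `F ↦ F ∩ sepDeriv A F`, which has the same iterates from the closed set
`univ`. For rationals `0 ≤ p < q ≤ 1` the sets `{χ ≤ p}`, `{χ ≥ q}` are `Aᶜ` and `A`, so the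
separation derivative is `sepDeriv A` itself. All remaining parameters give the empty
derivative, whose rank is at most that of any derivative. -/

section Iterates

variable {X : Type*}

theorem iterD_zero (D : Set X → Set X) (F : Set X) : iterD D F 0 = F :=
  Ordinal.limitRecOn_zero ..

theorem iterD_add_one (D : Set X → Set X) (F : Set X) (o : Ordinal) :
    iterD D F (o + 1) = D (iterD D F o) :=
  Ordinal.limitRecOn_add_one ..

theorem iterD_limit (D : Set X → Set X) (F : Set X) {o : Ordinal} (ho : Order.IsSuccLimit o) :
    iterD D F o = ⋂ (η : Ordinal) (_ : η < o), iterD D F η :=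
  Ordinal.limitRecOn_limit _ _ _ _ ho

theorem rkD_congr {D D' : Set X → Set X} (h : ∀ θ, iterD D univ θ = iterD D' univ θ) :
    rkD D = rkD D' := by
  have hfun : iterD D univ = iterD D' univ := funext h
  unfold rkD
  rw [hfun]

theorem rkD_le_of_iterD_eq_empty {D : Set X → Set X} {θ : Ordinal} (h : iterD D univ θ = ∅) :
    rkD D ≤ θ := by
  rw [rkD, if_pos ⟨θ, h⟩]
  exact csInf_le' h

theorem one_le_rkD [Nonempty X] (D : Set X → Set X) : 1 ≤ rkD D := by
  rw [Order.one_le_iff_pos, rkD]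
  split_ifs with hex
  · refine pos_iff_ne_zero.mpr fun h0 => ?_
    have hempty : iterD D univ (sInf {θ | iterD D univ θ = ∅}) = ∅ := csInf_mem hex
    rw [h0, iterD_zero] at hempty
    exact univ_nonempty.ne_empty hempty
  · exact Cardinal.isRegular_aleph_one.ord_pos

theorem rkD_le_rkD_of_eq_empty {D : Set X → Set X} (hD : ∀ F, D F = ∅) (D' : Set X → Set X) :
    rkD D ≤ rkD D' := by
  rcases isEmpty_or_nonempty X with hX | hX
  · have h0 : iterD D univ 0 = ∅ := by rw [iterD_zero]; exact univ_eq_empty_iff.mpr hX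
    exact (rkD_le_of_iterD_eq_empty h0).trans zero_le
  · have h1 : iterD D univ 1 = ∅ := by rw [← zero_add 1, iterD_add_one, hD]
    exact (rkD_le_of_iterD_eq_empty h1).trans (one_le_rkD D')

variable [TopologicalSpace X] {D D' : Set X → Set X}

theorem isClosed_iterD (hD : ∀ F, IsClosed F → IsClosed (D F)) {F : Set X} (hF : IsClosed F)
    (θ : Ordinal) : IsClosed (iterD D F θ) := by
  induction θ using Ordinal.limitRecOn with
  | zero => rwa [iterD_zero]
  | add_one o ih => rw [iterD_add_one]; exact hD _ ih
  | limit o ho ih => rw [iterD_limit _ _ ho]; exact isClosed_biInter ih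

theorem iterD_congr_of_isClosed (hD : ∀ F, IsClosed F → IsClosed (D F))
    (hDD' : ∀ F, IsClosed F → D F = D' F) {F : Set X} (hF : IsClosed F) (θ : Ordinal) :
    iterD D F θ = iterD D' F θ := by
  induction θ using Ordinal.limitRecOn with
  | zero => rw [iterD_zero, iterD_zero]
  | add_one o ih => rw [iterD_add_one, iterD_add_one, ← ih, hDD' _ (isClosed_iterD hD hF o)]
  | limit o ho ih =>
    rw [iterD_limit _ _ ho, iterD_limit _ _ ho]
    exact iInter₂_congr ih

end Iterates

section Oscillation

variable {X : Type*} [TopologicalSpace X] {f : X → ℝ} {x : X} {F : Set X}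

theorem osc_le {U : Set X} (hU : IsOpen U) (hx : x ∈ U) {c : ENNReal}
    (h : ∀ y ∈ U ∩ F, ∀ z ∈ U ∩ F, ENNReal.ofReal |f y - f z| ≤ c) : osc f x F ≤ c :=
  (iInf₂_le U hU).trans <| (iInf_le _ hx).trans <| iSup₂_le fun y hy => iSup₂_le (h y hy)

theorem osc_eq_zero_of_eqOn {U : Set X} (hU : IsOpen U) (hx : x ∈ U) {c : ℝ}
    (h : ∀ y ∈ U ∩ F, f y = c) : osc f x F = 0 :=
  nonpos_iff_eq_zero.mp <| osc_le hU hx fun y hy z hz => by simp [h y hy, h z hz]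

theorem le_osc {c : ENNReal}
    (h : ∀ U, IsOpen U → x ∈ U → ∃ y ∈ U ∩ F, ∃ z ∈ U ∩ F, c ≤ ENNReal.ofReal |f y - f z|) :
    c ≤ osc f x F :=
  le_iInf₂ fun U hU => le_iInf fun hx => by
    obtain ⟨y, hy, z, hz, hc⟩ := h U hU hx
    exact le_iSup₂_of_le y hy (le_iSup₂_of_le z hz hc)

end Oscillation

section IndicatorOne

variable {X : Type*} (A : Set X)

theorem abs_indicator_one_sub_le_one (y z : X) :
    |A.indicator (fun _ => (1 : ℝ)) y - A.indicator (fun _ => (1 : ℝ)) z| ≤ 1 := by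
  by_cases hy : y ∈ A <;> by_cases hz : z ∈ A <;> simp [hy, hz]

theorem indicator_one_le_eq_compl {p : ℝ} (hp0 : 0 ≤ p) (hp1 : p < 1) :
    {x | A.indicator (fun _ => (1 : ℝ)) x ≤ p} = Aᶜ := by
  ext x
  by_cases hx : x ∈ A <;> simp [hx, hp0, hp1.not_ge]

theorem le_indicator_one_eq_self {q : ℝ} (hq0 : 0 < q) (hq1 : q ≤ 1) :
    {x | q ≤ A.indicator (fun _ => (1 : ℝ)) x} = A := by
  ext x
  by_cases hx : x ∈ A <;> simp [hx, hq1, hq0.not_ge]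

theorem indicator_one_le_eq_empty {p : ℝ} (hp : p < 0) :
    {x | A.indicator (fun _ => (1 : ℝ)) x ≤ p} = ∅ := by
  ext x
  by_cases hx : x ∈ A <;> simp [hx, hp, (hp.trans zero_lt_one).not_ge]

theorem le_indicator_one_eq_empty {q : ℝ} (hq : 1 < q) :
    {x | q ≤ A.indicator (fun _ => (1 : ℝ)) x} = ∅ := by
  ext x
  by_cases hx : x ∈ A <;> simp [hx, hq.not_ge, (zero_lt_one.trans hq).not_ge]

end IndicatorOne

section Indicator

variable {X : Type*} [TopologicalSpace X] (A : Set X)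

def sepDeriv (F : Set X) : Set X :=
  closure (F ∩ Aᶜ) ∩ closure (F ∩ A)

theorem isClosed_sepDeriv (F : Set X) : IsClosed (sepDeriv A F) :=
  isClosed_closure.inter isClosed_closure

theorem inter_sepDeriv_of_isClosed {F : Set X} (hF : IsClosed F) :
    F ∩ sepDeriv A F = sepDeriv A F :=
  inter_eq_self_of_subset_right <|
    inter_subset_left.trans <| closure_minimal inter_subset_left hF

theorem osc_indicator_one (x : X) (F : Set X) :
    osc (A.indicator fun _ => (1 : ℝ)) x F = (sepDeriv A F).indicator 1 x := by
  by_cases hx : x ∈ sepDeriv A F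
  · rw [indicator_of_mem hx, Pi.one_apply]
    refine le_antisymm (osc_le isOpen_univ (mem_univ x) fun y _ z _ =>
      ENNReal.ofReal_le_one.mpr (abs_indicator_one_sub_le_one A y z)) (le_osc fun U hU hxU => ?_)
    obtain ⟨y, hyU, hyF, hyA⟩ := mem_closure_iff.mp hx.1 U hU hxU
    obtain ⟨z, hzU, hzF, hzA⟩ := mem_closure_iff.mp hx.2 U hU hxU
    exact ⟨y, ⟨hyU, hyF⟩, z, ⟨hzU, hzF⟩, by simp [indicator_of_notMem hyA, hzA]⟩
  · rw [indicator_of_notMem hx]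
    simp only [sepDeriv, mem_inter_iff, mem_closure_iff, not_and_or, not_forall,
      not_nonempty_iff_eq_empty, exists_prop] at hx
    rcases hx with ⟨U, hU, hxU, hUA⟩ | ⟨U, hU, hxU, hUA⟩
    · refine osc_eq_zero_of_eqOn hU hxU (c := 1) fun y ⟨hyU, hyF⟩ => indicator_of_mem ?_ _
      by_contra hyA
      exact (eq_empty_iff_forall_notMem.mp hUA) y ⟨hyU, hyF, hyA⟩
    · refine osc_eq_zero_of_eqOn hU hxU (c := 0) fun y ⟨hyU, hyF⟩ => indicator_of_notMem ?_ _
      exact fun hyA => (eq_empty_iff_forall_notMem.mp hUA) y ⟨hyU, hyF, hyA⟩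

theorem oscDeriv_indicator_one {ε : ℝ} (hε0 : 0 < ε) (hε1 : ε ≤ 1) (F : Set X) :
    oscDeriv (A.indicator fun _ => (1 : ℝ)) ε F = F ∩ sepDeriv A F := by
  ext x
  by_cases hx : x ∈ sepDeriv A F <;>
    simp [oscDeriv, osc_indicator_one, hx, hε1, hε0.not_ge]

theorem oscDeriv_indicator_one_of_one_lt {ε : ℝ} (hε : 1 < ε) (F : Set X) :
    oscDeriv (A.indicator fun _ => (1 : ℝ)) ε F = ∅ := by
  ext x
  by_cases hx : x ∈ sepDeriv A F <;>
    simp [oscDeriv, osc_indicator_one, hx, hε.not_ge, (zero_lt_one.trans hε).not_ge]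

theorem rkD_oscDeriv_indicator_one {ε : ℝ} (hε0 : 0 < ε) (hε1 : ε ≤ 1) :
    rkD (oscDeriv (A.indicator fun _ => (1 : ℝ)) ε) = rkD (sepDeriv A) := by
  refine rkD_congr (iterD_congr_of_isClosed ?_ ?_ isClosed_univ)
  · intro F hF
    rw [oscDeriv_indicator_one A hε0 hε1]
    exact hF.inter (isClosed_sepDeriv A F)
  · intro F hF
    rw [oscDeriv_indicator_one A hε0 hε1, inter_sepDeriv_of_isClosed A hF]

theorem betaRank_indicator_one :
    betaRank (A.indicator fun _ => (1 : ℝ)) = rkD (sepDeriv A) := by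
  let one : {ε : ℝ // 0 < ε} := ⟨1, one_pos⟩
  have : Nonempty {ε : ℝ // 0 < ε} := ⟨one⟩
  unfold betaRank
  refine le_antisymm (ciSup_le fun ε => ?_) ?_
  · rcases le_or_gt ε.1 1 with hε1 | hε1
    · exact (rkD_oscDeriv_indicator_one A ε.2 hε1).le
    · exact rkD_le_rkD_of_eq_empty (oscDeriv_indicator_one_of_one_lt A hε1) _
  · exact le_of_eq_of_le (rkD_oscDeriv_indicator_one A one_pos le_rfl).symm
      (Ordinal.le_iSup _ one)

theorem alphaDeriv_indicator_one {p q : ℝ} (hp0 : 0 ≤ p) (hpq : p < q) (hq1 : q ≤ 1) :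
    (fun F => closure (F ∩ {x | A.indicator (fun _ => (1 : ℝ)) x ≤ p}) ∩
      closure (F ∩ {x | q ≤ A.indicator (fun _ => (1 : ℝ)) x})) = sepDeriv A := by
  rw [indicator_one_le_eq_compl A hp0 (hpq.trans_le hq1),
    le_indicator_one_eq_self A (hp0.trans_lt hpq) hq1]
  rfl

theorem rkD_alphaDeriv_indicator_one_le {p q : ℝ} (hpq : p < q) :
    rkD (fun F => closure (F ∩ {x | A.indicator (fun _ => (1 : ℝ)) x ≤ p}) ∩
      closure (F ∩ {x | q ≤ A.indicator (fun _ => (1 : ℝ)) x})) ≤ rkD (sepDeriv A) := by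
  rcases lt_or_ge p 0 with hp0 | hp0
  · exact rkD_le_rkD_of_eq_empty (fun F => by simp [indicator_one_le_eq_empty A hp0]) _
  rcases lt_or_ge 1 q with hq1 | hq1
  · exact rkD_le_rkD_of_eq_empty (fun F => by simp [le_indicator_one_eq_empty A hq1]) _
  rw [alphaDeriv_indicator_one A hp0 hpq hq1]

theorem alphaRank_indicator_one :
    alphaRank (A.indicator fun _ => (1 : ℝ)) = rkD (sepDeriv A) := by
  let zeroOne : {pq : ℚ × ℚ // pq.1 < pq.2} := ⟨(0, 1), zero_lt_one⟩
  have : Nonempty {pq : ℚ × ℚ // pq.1 < pq.2} := ⟨zeroOne⟩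
  unfold alphaRank
  refine le_antisymm (ciSup_le fun pq => rkD_alphaDeriv_indicator_one_le A (mod_cast pq.2)) ?_
  refine le_of_eq_of_le ?_ (Ordinal.le_iSup _ zeroOne)
  simp only [zeroOne, Rat.cast_zero, Rat.cast_one,
    alphaDeriv_indicator_one A le_rfl zero_lt_one le_rfl]

end Indicator

theorem stmt7_general {X : Type*} [TopologicalSpace X] (A : Set X) :
    alphaRank (A.indicator fun _ => (1 : ℝ)) =
      betaRank (A.indicator fun _ => (1 : ℝ)) := by
  rw [alphaRank_indicator_one, betaRank_indicator_one]

theorem stmt7 {X : Type*} [TopologicalSpace X] [PolishSpace X] (A : Set X)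
    (h : BaireClass 1 (A.indicator fun _ => (1 : ℝ))) :
    alphaRank (A.indicator fun _ => (1 : ℝ)) =
      betaRank (A.indicator fun _ => (1 : ℝ)) :=
  stmt7_general A
end
end

section
/- Let (f_η)_{η<λ} be a decreasing transfinite sequence of non-negative bounded functions. Then for all even ordinals θ₁ ≤ θ₂ ≤ λ, the partial alternating sums satisfy Σ*_{η<θ₁} (−1)^η f_η ≤ Σ*_{η<θ₂} (−1)^η f_η pointwise. -/
open Set Filter Topology

noncomputable section

/-!
For even `ζ ≤ θ`, the partial sum at `θ` lies between `Σ*_{η<ζ}` and `Σ*_{η<ζ} + f_ζ - f_θ`.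
Both bounds are proved together by induction on `θ`: an even successor is `μ + 2` with `μ` even,
where the sum gains `f_μ - f_{μ+1} ∈ [0, f_μ - f_{μ+2}]`; at a limit the lower bound gives the
supremum and the upper bound, valid for every even `ξ < θ` by comparing `ξ` with `ζ`, bounds it.
-/

namespace Ordinal

theorem add_one_mod_two_of_mod_two_eq_zero {o : Ordinal} (h : o % 2 = 0) : (o + 1) % 2 = 1 := by
  have ho : 2 * (o / 2) = o := by simpa [h] using div_add_mod o 2
  rw [← ho, mul_add_mod_self]
  exact mod_eq_of_lt one_lt_two

theorem eq_zero_or_isSuccLimit_or_eq_add_one_add_one {θ : Ordinal} (h : θ % 2 = 0) :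
    θ = 0 ∨ Order.IsSuccLimit θ ∨ ∃ μ, μ % 2 = 0 ∧ θ = μ + 1 + 1 := by
  have hθ : 2 * (θ / 2) = θ := by simpa [h] using div_add_mod θ 2
  rcases zero_or_succ_or_isSuccLimit (θ / 2) with h0 | ⟨p, hp⟩ | hlim
  · left
    rw [← hθ, h0, mul_zero]
  · refine Or.inr (Or.inr ⟨2 * p, mul_mod 2 p, ?_⟩)
    rw [← hθ, ← hp, Order.succ_eq_add_one, mul_add_one, add_assoc, one_add_one_eq_two]
  · exact Or.inr (Or.inl (hθ ▸ isSuccLimit_mul_right two_pos hlim))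

end Ordinal

open Ordinal

section AltSum

variable {X : Type*} (f : Ordinal.{0} → X → ℝ)

theorem altSum_add_one (η : Ordinal.{0}) (x : X) :
    altSum f (η + 1) x = altSum f η x + (if η % 2 = 0 then f η x else - f η x) := by
  rw [altSum, limitRecOn_add_one]
  rfl

theorem altSum_add_one_add_one {μ : Ordinal.{0}} (hμ : μ % 2 = 0) (x : X) :
    altSum f (μ + 1 + 1) x = altSum f μ x + f μ x - f (μ + 1) x := by
  rw [altSum_add_one, altSum_add_one, add_one_mod_two_of_mod_two_eq_zero hμ, if_pos hμ,
    if_neg one_ne_zero]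
  ring

theorem altSum_of_isSuccLimit {θ : Ordinal.{0}} (hθ : Order.IsSuccLimit θ) (x : X) :
    altSum f θ x = sSup {y | ∃ ζ, ∃ _ : ζ < θ, ζ % 2 = 0 ∧ altSum f ζ x = y} := by
  rw [altSum, limitRecOn_limit _ _ _ _ hθ]
  rfl

variable {f}

theorem altSum_le_altSum_of_isSuccLimit {θ : Ordinal.{0}} (hθ : Order.IsSuccLimit θ) {x : X}
    {c : ℝ} (hc : ∀ ξ < θ, ξ % 2 = 0 → altSum f ξ x ≤ c) {ζ : Ordinal.{0}} (hζθ : ζ < θ)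
    (hζ : ζ % 2 = 0) : altSum f ζ x ≤ altSum f θ x := by
  rw [altSum_of_isSuccLimit f hθ]
  refine le_csSup ⟨c, ?_⟩ ⟨ζ, hζθ, hζ, rfl⟩
  rintro _ ⟨ξ, hξθ, hξ, rfl⟩
  exact hc ξ hξθ hξ

theorem altSum_le_of_isSuccLimit {θ : Ordinal.{0}} (hθ : Order.IsSuccLimit θ) {x : X} {c : ℝ}
    (hc : ∀ ξ < θ, ξ % 2 = 0 → altSum f ξ x ≤ c) : altSum f θ x ≤ c := by
  rw [altSum_of_isSuccLimit f hθ]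
  refine csSup_le ⟨_, 0, hθ.bot_lt, zero_mod 2, rfl⟩ ?_
  rintro _ ⟨ξ, hξθ, hξ, rfl⟩
  exact hc ξ hξθ hξ

theorem altSum_le_altSum_and_altSum_add_le_altSum_add {lam : Ordinal.{0}} (hf : AntitoneOn f (Iic lam))
    {θ : Ordinal.{0}} (hθ : θ % 2 = 0) (hθl : θ ≤ lam) {ζ : Ordinal.{0}} (hζ : ζ % 2 = 0)
    (hζθ : ζ ≤ θ) (x : X) :
    altSum f ζ x ≤ altSum f θ x ∧ altSum f θ x + f θ x ≤ altSum f ζ x + f ζ x := by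
  induction θ using WellFoundedLT.induction generalizing ζ with | _ θ ih
  have hf' {η ξ : Ordinal.{0}} (hηξ : η ≤ ξ) (hξθ : ξ ≤ θ) : f ξ x ≤ f η x :=
    hf (hηξ.trans (hξθ.trans hθl)) (hξθ.trans hθl) hηξ x
  rcases hζθ.eq_or_lt with rfl | hζθ
  · exact ⟨le_rfl, le_rfl⟩
  rcases eq_zero_or_isSuccLimit_or_eq_add_one_add_one hθ with rfl | hlim | ⟨μ, hμ, rfl⟩
  · exact (not_lt_zero hζθ).elim
  · have upper : ∀ ξ < θ, ξ % 2 = 0 → altSum f ξ x ≤ altSum f ζ x + f ζ x - f θ x := by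
      intro ξ hξθ hξ
      have hξl := hξθ.le.trans hθl
      rcases le_total ζ ξ with hζξ | hξζ
      · linarith [(ih ξ hξθ hξ hξl hζ hζξ).2, hf' hξθ.le le_rfl]
      · linarith [(ih ζ hζθ hζ (hζθ.le.trans hθl) hξ hξζ).1, hf' hζθ.le le_rfl]
    constructor
    · exact altSum_le_altSum_of_isSuccLimit hlim upper hζθ hζ
    · linarith [altSum_le_of_isSuccLimit hlim upper]
  · have hμθ : μ < μ + 1 + 1 := (lt_add_one μ).trans (lt_add_one _)
    have hζμ : ζ ≤ μ := by
      rcases (Order.lt_add_one_iff.mp hζθ).eq_or_lt with rfl | h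
      · exact absurd hζ (by rw [add_one_mod_two_of_mod_two_eq_zero hμ]; exact one_ne_zero)
      · exact Order.lt_add_one_iff.mp h
    obtain ⟨ih_mono, ih_anti⟩ := ih μ hμθ hμ (hμθ.le.trans hθl) hζ hζμ
    rw [altSum_add_one_add_one f hμ]
    have h₁ := hf' (lt_add_one μ).le (lt_add_one _).le
    have h₂ := hf' (lt_add_one (μ + 1)).le le_rfl
    constructor <;> linarith

end AltSum

theorem stmt8_general {X : Type*} (lam : Ordinal.{0}) (f : Ordinal.{0} → X → ℝ)
    (hmono : ∀ η ζ : Ordinal.{0}, η ≤ ζ → ζ ≤ lam → ∀ x, f ζ x ≤ f η x)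
    (θ₁ θ₂ : Ordinal.{0}) (h1 : θ₁ % 2 = 0) (h2 : θ₂ % 2 = 0)
    (h12 : θ₁ ≤ θ₂) (h2l : θ₂ ≤ lam) (x : X) :
    altSum f θ₁ x ≤ altSum f θ₂ x :=
  (altSum_le_altSum_and_altSum_add_le_altSum_add (fun _ _ _ hζ hηζ => hmono _ _ hηζ hζ) h2 h2l h1 h12 x).1

theorem stmt8 {X : Type*} (lam : Ordinal.{0}) (f : Ordinal.{0} → X → ℝ)
    (hmono : ∀ η ζ : Ordinal.{0}, η ≤ ζ → ζ ≤ lam → ∀ x, f ζ x ≤ f η x)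
    (hnn : ∀ η : Ordinal.{0}, η ≤ lam → ∀ x, 0 ≤ f η x)
    (hbd : ∀ η : Ordinal.{0}, η ≤ lam → ∃ M, ∀ x, |f η x| ≤ M)
    (θ₁ θ₂ : Ordinal.{0}) (h1 : θ₁ % 2 = 0) (h2 : θ₂ % 2 = 0)
    (h12 : θ₁ ≤ θ₂) (h2l : θ₂ ≤ lam) (x : X) :
    altSum f θ₁ x ≤ altSum f θ₂ x :=
  stmt8_general lam f hmono θ₁ θ₂ h1 h2 h12 h2l x

end
end

section
/- Let (F_η)_{η<ω^{λ+1}} be a decreasing continuous transfinite sequence of closed subsets of a Polish space with F₀ = X and ⋂_η F_η = ∅, let A = ⋃_{η even} (F_η \ F_{η+1}), let (λ_k) be an increasing sequence of positive even ordinals with λ_k → ω^λ, and let B_k = ⋃_{n∈ℕ} ⋃_{ω^λ·n ≤ η < ω^λ·n + λ_k, η even} (F_η \ F_{η+1}). Then χ_{B_k} → χ_A pointwise. -/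
open Set Filter Topology

noncomputable section

/-!
Every `η < ω^(λ+1) = ω^λ · ω` is `ω^λ · n + r` with `n ∈ ℕ` and `r < ω^λ`, and since
`λ_k → ω^λ` eventually `r < λ_k`. Hence `B_k` increases with `k` and `⋃ₖ B_k = A`, so
`χ_{B_k} → χ_A` pointwise, being eventually constant at every point.
-/

namespace Ordinal

theorem exists_nat_eq_mul_add_mod_of_lt_mul_omega0 {b η : Ordinal} (h : η < b * ω) :
    ∃ n : ℕ, η = b * n + η % b := by
  have hb : b ≠ 0 := by
    rintro rfl
    simp at h
  obtain ⟨n, hn⟩ := lt_omega0.mp ((lt_mul_iff_div_lt hb).mp h)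
  exact ⟨n, by rw [← hn, div_add_mod]⟩

theorem mul_nat_add_lt_mul_omega0 {b c : Ordinal} (hc : c < b) (n : ℕ) : b * n + c < b * ω :=
  calc b * n + c < b * n + b := (add_lt_add_iff_left _).mpr hc
    _ = b * (n + 1 : ℕ) := by push_cast; rw [mul_add_one]
    _ ≤ b * ω := by gcongr; exact (natCast_lt_omega0 _).le

end Ordinal

theorem stmt18_general {X : Type*}
    (lam : Ordinal.{0})
    (F : Ordinal.{0} → Set X)
    (A : Set X)
    (hA : A = ⋃ (η : Ordinal.{0}) (_ : η < Ordinal.omega0 ^ (lam + 1))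
      (_ : η % 2 = 0), F η \ F (η + 1))
    (lamk : ℕ → Ordinal.{0}) (hlk : StrictMono lamk)
    (hlklt : ∀ k, lamk k < Ordinal.omega0 ^ lam)
    (hlkto : ∀ η : Ordinal.{0}, η < Ordinal.omega0 ^ lam → ∃ k, η < lamk k)
    (B : ℕ → Set X)
    (hB : ∀ k, B k = ⋃ (n : ℕ), ⋃ (η : Ordinal.{0})
      (_ : Ordinal.omega0 ^ lam * (n : Ordinal.{0}) ≤ η)
      (_ : η < Ordinal.omega0 ^ lam * (n : Ordinal.{0}) + lamk k)
      (_ : η % 2 = 0), F η \ F (η + 1)) :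
    ∀ x, Tendsto (fun k => Set.indicator (B k) (fun _ => (1 : ℝ)) x) atTop
      (𝓝 (Set.indicator A (fun _ => (1 : ℝ)) x)) := by
  have hω : Ordinal.omega0 ^ (lam + 1) = Ordinal.omega0 ^ lam * Ordinal.omega0 := by
    rw [← Order.succ_eq_add_one, Ordinal.opow_succ]
  have hB_mono : Monotone B := by
    intro i j hij x
    simp only [hB, mem_iUnion]
    rintro ⟨n, η, hge, hlt, heven, hx⟩
    exact ⟨n, η, hge, hlt.trans_le (by gcongr; exact hlk.monotone hij), heven, hx⟩
  have hB_iUnion : ⋃ k, B k = A := by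
    ext x
    simp only [hA, hB, hω, mem_iUnion]
    constructor
    · rintro ⟨k, n, η, -, hlt, heven, hx⟩
      exact ⟨η, hlt.trans (Ordinal.mul_nat_add_lt_mul_omega0 (hlklt k) n), heven, hx⟩
    · rintro ⟨η, hη, heven, hx⟩
      obtain ⟨n, hn⟩ := Ordinal.exists_nat_eq_mul_add_mod_of_lt_mul_omega0 hη
      obtain ⟨k, hk⟩ := hlkto _ (Ordinal.mod_lt η (Ordinal.opow_pos lam Ordinal.omega0_pos).ne')
      refine ⟨k, n, η, ?_, ?_, heven, hx⟩ <;> rw [hn]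
      · exact le_self_add
      · exact (add_lt_add_iff_left _).mpr hk
  intro x
  rw [← hB_iUnion]
  exact (hB_mono.tendsto_indicator _ _ x).mono_right (pure_le_nhds _)

theorem stmt18 {X : Type*} [TopologicalSpace X] [PolishSpace X]
    (lam : Ordinal.{0}) (hlamc : lam.card ≤ Cardinal.aleph0)
    (F : Ordinal.{0} → Set X)
    (hcl : ∀ η : Ordinal.{0}, η < Ordinal.omega0 ^ (lam + 1) → IsClosed (F η))
    (hdec : ∀ η ζ : Ordinal.{0}, η ≤ ζ → ζ < Ordinal.omega0 ^ (lam + 1) → F ζ ⊆ F η)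
    (hcont : ∀ θ : Ordinal.{0}, θ < Ordinal.omega0 ^ (lam + 1) → Order.IsSuccLimit θ →
      F θ = ⋂ (η : Ordinal.{0}) (_ : η < θ), F η)
    (hF0 : F 0 = Set.univ)
    (hint : ⋂ (η : Ordinal.{0}) (_ : η < Ordinal.omega0 ^ (lam + 1)), F η = ∅)
    (A : Set X)
    (hA : A = ⋃ (η : Ordinal.{0}) (_ : η < Ordinal.omega0 ^ (lam + 1))
      (_ : η % 2 = 0), F η \ F (η + 1))
    (lamk : ℕ → Ordinal.{0}) (hlk : StrictMono lamk)
    (hlk0 : ∀ k, 0 < lamk k) (hlke : ∀ k, lamk k % 2 = 0)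
    (hlklt : ∀ k, lamk k < Ordinal.omega0 ^ lam)
    (hlkto : ∀ η : Ordinal.{0}, η < Ordinal.omega0 ^ lam → ∃ k, η < lamk k)
    (B : ℕ → Set X)
    (hB : ∀ k, B k = ⋃ (n : ℕ), ⋃ (η : Ordinal.{0})
      (_ : Ordinal.omega0 ^ lam * (n : Ordinal.{0}) ≤ η)
      (_ : η < Ordinal.omega0 ^ lam * (n : Ordinal.{0}) + lamk k)
      (_ : η % 2 = 0), F η \ F (η + 1)) :
    ∀ x, Tendsto (fun k => Set.indicator (B k) (fun _ => (1 : ℝ)) x) atTop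
      (𝓝 (Set.indicator A (fun _ => (1 : ℝ)) x)) :=
  stmt18_general lam F A hA lamk hlk hlklt hlkto B hB

end
end
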